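/- arXiv:2012.11800 — 3 statements merged into one kernel-verified Lean document; each statement's English description precedes it below -/
import Mathlib

section
/- Let f : A → B be a homomorphism of algebras of the same type and a⃗, b⃗ ∈ A^k. Then the commutative square formed by the canonical quotient maps ν : A → A/Cg^A(a⃗,b⃗), μ : B → B/Cg^B(f(a⃗),f(b⃗)), the map f, and the induced homomorphism ψ : A/Cg^A(a⃗,b⃗) → B/Cg^B(f(a⃗),f(b⃗)) is a pushout square in the category of algebras of that type. -/
/-- A similarity type (signature) of algebras. -/
structure Sgn where
  ops : Type
  arity : ops → ℕ

/-- An algebra of signature `σ` on carrier `A`. -/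
class MAlg (σ : Sgn) (A : Type) where
  app : ∀ o : σ.ops, (Fin (σ.arity o) → A) → A

/-- Homomorphisms of `σ`-algebras. -/
structure MHom (σ : Sgn) (A B : Type) [MAlg σ A] [MAlg σ B] where
  toFun : A → B
  map_app : ∀ (o : σ.ops) (x : Fin (σ.arity o) → A),
    toFun (MAlg.app o x) = MAlg.app o (fun i => toFun (x i))

/-- `r` is a congruence of the `σ`-algebra `A`. -/
def IsCong (σ : Sgn) (A : Type) [MAlg σ A] (r : A → A → Prop) : Prop :=
  Equivalence r ∧ ∀ (o : σ.ops) (x y : Fin (σ.arity o) → A),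
    (∀ i, r (x i) (y i)) → r (MAlg.app o x) (MAlg.app o y)

/-- The congruence of `A` generated by a set `S` of pairs. -/
def cgen (σ : Sgn) (A : Type) [MAlg σ A] (S : Set (A × A)) : A → A → Prop :=
  fun a b => ∀ r : A → A → Prop, IsCong σ A r → (∀ p ∈ S, r p.1 p.2) → r a b

/-- The congruence generated by the pairs `(a i, b i)`. -/
def cgenP (σ : Sgn) (A : Type) [MAlg σ A] {k : ℕ} (a b : Fin k → A) : A → A → Prop :=
  cgen σ A {p | ∃ i, p = (a i, b i)}

attribute [reducible] cgenP

theorem cgen_isCong (σ : Sgn) (A : Type) [MAlg σ A] (S : Set (A × A)) :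
    IsCong σ A (cgen σ A S) := by
  constructor
  · constructor
    · intro a r hr _; exact hr.1.refl a
    · intro a b h r hr hS; exact hr.1.symm (h r hr hS)
    · intro a b c h1 h2 r hr hS; exact hr.1.trans (h1 r hr hS) (h2 r hr hS)
  · intro o x y h r hr hS
    exact hr.2 o x y (fun i => h i r hr hS)

/-- The setoid attached to a congruence. -/
def conStd {σ : Sgn} {A : Type} [MAlg σ A] (r : A → A → Prop) (h : IsCong σ A r) :
    Setoid A := ⟨r, h.1⟩

/-- The quotient of an algebra by a congruence. -/
abbrev QuotC {σ : Sgn} {A : Type} [MAlg σ A] (r : A → A → Prop) (h : IsCong σ A r) : Type :=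
  Quotient (conStd r h)

noncomputable instance {σ : Sgn} {A : Type} [MAlg σ A] {r : A → A → Prop} {h : IsCong σ A r} :
    MAlg σ (QuotC r h) :=
  ⟨fun o x => Quotient.mk (conStd r h) (MAlg.app o (fun i => (x i).out))⟩

/-- The canonical quotient homomorphism. -/
noncomputable def qmap {σ : Sgn} {A : Type} [MAlg σ A] (r : A → A → Prop) (h : IsCong σ A r) :
    MHom σ A (QuotC r h) where
  toFun a := Quotient.mk (conStd r h) a
  map_app o x := by
    apply Quotient.sound
    exact h.2 o x (fun i => (Quotient.mk (conStd r h) (x i)).out)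
      (fun i => (conStd r h).symm (Quotient.mk_out (s := conStd r h) (x i)))

/-- The product algebra. -/
instance {σ : Sgn} {A B : Type} [MAlg σ A] [MAlg σ B] : MAlg σ (A × B) :=
  ⟨fun o x => (MAlg.app o (fun i => (x i).1), MAlg.app o (fun i => (x i).2))⟩

/-- Composition of homomorphisms. -/
def MHom.comp {σ : Sgn} {A B C : Type} [MAlg σ A] [MAlg σ B] [MAlg σ C]
    (g : MHom σ B C) (f : MHom σ A B) : MHom σ A C where
  toFun := g.toFun ∘ f.toFun
  map_app o x := by simp [Function.comp, f.map_app, g.map_app]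

/-!
A homomorphism `w` out of `B/Cg(f a⃗, f b⃗)` is determined by `w ∘ μ`, and `v : B → D` factors
through `μ` exactly when its kernel contains the generating pairs `(f aᵢ, f bᵢ)`. For the cocone
`(u, v)` this holds because `v (f aᵢ) = u (ν aᵢ) = u (ν bᵢ) = v (f bᵢ)`; the factorisation `w`
then satisfies `w ∘ ψ = u` since `ν` is surjective and `w ∘ ψ ∘ ν = w ∘ μ ∘ f = v ∘ f = u ∘ ν`.
-/

namespace MHom

variable {σ : Sgn} {A B : Type} [MAlg σ A] [MAlg σ B]

theorem ext {g h : MHom σ A B} (hgh : ∀ x, g.toFun x = h.toFun x) : g = h := by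
  cases g; cases h; congr; exact funext hgh

theorem isCong_ker (g : MHom σ A B) : IsCong σ A (fun x y => g.toFun x = g.toFun y) := by
  refine ⟨⟨fun _ => rfl, Eq.symm, Eq.trans⟩, fun o x y hxy => ?_⟩
  show g.toFun _ = g.toFun _
  rw [g.map_app, g.map_app]
  exact congrArg _ (funext hxy)

end MHom

theorem cgen_of_mem {σ : Sgn} {A : Type} [MAlg σ A] {S : Set (A × A)} {p : A × A}
    (hp : p ∈ S) : cgen σ A S p.1 p.2 :=
  fun _ _ hS => hS p hp

theorem cgen_le_ker {σ : Sgn} {A D : Type} [MAlg σ A] [MAlg σ D] {S : Set (A × A)}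
    (g : MHom σ A D) (hS : ∀ p ∈ S, g.toFun p.1 = g.toFun p.2) {x y : A}
    (hxy : cgen σ A S x y) : g.toFun x = g.toFun y :=
  hxy _ g.isCong_ker hS

namespace QuotC

variable {σ : Sgn} {A D : Type} [MAlg σ A] [MAlg σ D] {r : A → A → Prop} {hr : IsCong σ A r}

noncomputable def lift (g : MHom σ A D) (hg : ∀ x y, r x y → g.toFun x = g.toFun y) :
    MHom σ (QuotC r hr) D where
  toFun := Quotient.lift g.toFun hg
  map_app o x := by
    show g.toFun (MAlg.app o fun i => (x i).out) = _
    rw [g.map_app]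
    congr 1
    funext i
    conv_rhs => rw [← Quotient.out_eq (x i)]
    rfl

@[simp]
theorem lift_qmap (g : MHom σ A D) (hg : ∀ x y, r x y → g.toFun x = g.toFun y) (x : A) :
    (lift g hg).toFun ((qmap r hr).toFun x) = g.toFun x :=
  rfl

theorem hom_ext {w w' : MHom σ (QuotC r hr) D}
    (h : ∀ x, w.toFun ((qmap r hr).toFun x) = w'.toFun ((qmap r hr).toFun x)) : w = w' :=
  MHom.ext fun q => Quotient.ind (motive := fun q => w.toFun q = w'.toFun q) h q

end QuotC

/-- the square formed by the canonical quotient maps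
`ν : A → A/Cg(a⃗,b⃗)`, `μ : B → B/Cg(f a⃗, f b⃗)`, `f` and the induced homomorphism `ψ`
is a pushout in the category of `σ`-algebras. -/
theorem stmt3 (σ : Sgn) (A B : Type) [MAlg σ A] [MAlg σ B]
    (f : MHom σ A B) (k : ℕ) (a b : Fin k → A)
    (ψ : MHom σ (QuotC (cgenP σ A a b) (cgen_isCong σ A _))
          (QuotC (cgenP σ B (fun i => f.toFun (a i)) (fun i => f.toFun (b i)))
            (cgen_isCong σ B _)))
    (hψ : ∀ x : A,
      ψ.toFun ((qmap (cgenP σ A a b) (cgen_isCong σ A _)).toFun x) =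
        (qmap (cgenP σ B (fun i => f.toFun (a i)) (fun i => f.toFun (b i)))
          (cgen_isCong σ B _)).toFun (f.toFun x)) :
    ∀ (D : Type) (iD : MAlg σ D)
      (u : @MHom σ (QuotC (cgenP σ A a b) (cgen_isCong σ A _)) D _ iD)
      (v : @MHom σ B D _ iD),
      (∀ x : A, u.toFun ((qmap (cgenP σ A a b) (cgen_isCong σ A _)).toFun x) =
          v.toFun (f.toFun x)) →
      ∃! w : @MHom σ (QuotC (cgenP σ B (fun i => f.toFun (a i)) (fun i => f.toFun (b i)))
            (cgen_isCong σ B _)) D _ iD,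
        (∀ q, w.toFun (ψ.toFun q) = u.toFun q) ∧
        (∀ x : B, w.toFun ((qmap (cgenP σ B (fun i => f.toFun (a i)) (fun i => f.toFun (b i)))
            (cgen_isCong σ B _)).toFun x) = v.toFun x) := by
  intro D iD u v huv
  have hgen : ∀ p ∈ {p : B × B | ∃ i, p = (f.toFun (a i), f.toFun (b i))},
      v.toFun p.1 = v.toFun p.2 := by
    rintro p ⟨i, rfl⟩
    rw [← huv, ← huv]
    exact congrArg u.toFun <| Quotient.sound <|
      cgen_of_mem (S := {p | ∃ j, p = (a j, b j)}) ⟨i, rfl⟩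
  let w := QuotC.lift (hr := cgen_isCong σ B _) v fun _ _ => cgen_le_ker v hgen
  have hwμ : ∀ x, w.toFun ((qmap _ _).toFun x) = v.toFun x := QuotC.lift_qmap v _
  refine ⟨w, ⟨fun q => ?_, hwμ⟩,
    fun w' hw' => QuotC.hom_ext fun x => (hw'.2 x).trans (hwμ x).symm⟩
  induction q using Quotient.ind with
  | _ x => exact (congrArg w.toFun (hψ x)).trans ((hwμ _).trans (huv x).symm)
end

section
/- In the category of bounded distributive lattices with bounded lattice homomorphisms, binary products are codisjoint: for all bounded distributive lattices A and B, the two product projections out of A × B are epimorphisms, and the pushout of the two projections p₀ : A × B → A and p₁ : A × B → B is the terminal (one-element) lattice. -/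
/-- The first projection as a bounded lattice homomorphism. -/
def fstBLHom (A B : Type) [DistribLattice A] [BoundedOrder A] [DistribLattice B]
    [BoundedOrder B] : BoundedLatticeHom (A × B) A where
  toFun := Prod.fst
  map_sup' _ _ := rfl
  map_inf' _ _ := rfl
  map_top' := rfl
  map_bot' := rfl

/-- The second projection as a bounded lattice homomorphism. -/
def sndBLHom (A B : Type) [DistribLattice A] [BoundedOrder A] [DistribLattice B]
    [BoundedOrder B] : BoundedLatticeHom (A × B) B where
  toFun := Prod.snd
  map_sup' _ _ := rfl
  map_inf' _ _ := rfl
  map_top' := rfl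
  map_bot' := rfl

/-- in bounded distributive lattices, binary products are codisjoint:
both projections are epimorphisms, and every cocone under the span of projections has a
trivial vertex, i.e. the pushout of the two projections is the one-element lattice. -/
theorem stmt4 (A B : Type) [DistribLattice A] [BoundedOrder A]
    [DistribLattice B] [BoundedOrder B] :
    (∀ (C : Type) (_ : DistribLattice C) (_ : BoundedOrder C)
      (g₁ g₂ : BoundedLatticeHom A C),
        g₁.comp (fstBLHom A B) = g₂.comp (fstBLHom A B) → g₁ = g₂) ∧
    (∀ (C : Type) (_ : DistribLattice C) (_ : BoundedOrder C)
      (g₁ g₂ : BoundedLatticeHom B C),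
        g₁.comp (sndBLHom A B) = g₂.comp (sndBLHom A B) → g₁ = g₂) ∧
    (∀ (D : Type) (_ : DistribLattice D) (_ : BoundedOrder D)
      (u : BoundedLatticeHom A D) (v : BoundedLatticeHom B D),
        u.comp (fstBLHom A B) = v.comp (sndBLHom A B) → Subsingleton D) := by
  refine ⟨?_, ?_, ?_⟩
  · intro C _ _ g₁ g₂ h
    ext a
    exact DFunLike.congr_fun h (a, ⊥)
  · intro C _ _ g₁ g₂ h
    ext b
    exact DFunLike.congr_fun h (⊥, b)
  · intro D _ _ u v h
    have key : (⊤ : D) = ⊥ := by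
      have h1 : u ⊤ = v ⊥ := DFunLike.congr_fun h ((⊤ : A), (⊥ : B))
      rw [map_top, map_bot] at h1
      exact h1
    constructor
    intro x y
    have hx : x = ⊥ := le_antisymm (key ▸ le_top) bot_le
    have hy : y = ⊥ := le_antisymm (key ▸ le_top) bot_le
    rw [hx, hy]
end

section
/- In any variety V possessing 0-ary terms 0₁,…,0_N, 1₁,…,1_N such that every algebra of V satisfying 0⃗ = 1⃗ is trivial, finite products are codisjoint: for all A, B ∈ V, the product projections p₀ : A × B → A and p₁ : A × B → B are epimorphisms and their pushout is the trivial (one-element) algebra. -/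
/-- The first projection as a homomorphism. -/
def projFst (σ : Sgn) (A B : Type) [MAlg σ A] [MAlg σ B] : MHom σ (A × B) A :=
  ⟨Prod.fst, fun _ _ => rfl⟩

/-- The second projection as a homomorphism. -/
def projSnd (σ : Sgn) (A B : Type) [MAlg σ A] [MAlg σ B] : MHom σ (A × B) B :=
  ⟨Prod.snd, fun _ _ => rfl⟩

/-- in any variety `K` possessing 0-ary terms `0⃗, 1⃗` (encoded as families of
elements preserved by all homomorphisms) such that every member satisfying `0⃗ = 1⃗` is
trivial, finite products are codisjoint: the projections are epic in `K` and every cocone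
in `K` under the span of projections has trivial vertex (the pushout is trivial). -/
theorem stmt10 (σ : Sgn) (K : ∀ A : Type, MAlg σ A → Prop) (N : ℕ)
    (zero one : ∀ (A : Type) [MAlg σ A], Fin N → A)
    (hz : ∀ (A B : Type) [MAlg σ A] [MAlg σ B] (f : MHom σ A B) (i : Fin N),
      f.toFun (zero A i) = zero B i)
    (ho : ∀ (A B : Type) [MAlg σ A] [MAlg σ B] (f : MHom σ A B) (i : Fin N),
      f.toFun (one A i) = one B i)
    (h01 : ∀ (A : Type) (iA : MAlg σ A), K A iA →
      (∀ i, zero A i = one A i) → Subsingleton A)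
    (A B : Type) [iA : MAlg σ A] [iB : MAlg σ B] (hKA : K A iA) (hKB : K B iB) :
    (∀ (C : Type) (iC : MAlg σ C), K C iC → ∀ g₁ g₂ : @MHom σ A C _ iC,
      g₁.comp (projFst σ A B) = g₂.comp (projFst σ A B) → g₁ = g₂) ∧
    (∀ (C : Type) (iC : MAlg σ C), K C iC → ∀ g₁ g₂ : @MHom σ B C _ iC,
      g₁.comp (projSnd σ A B) = g₂.comp (projSnd σ A B) → g₁ = g₂) ∧
    (∀ (D : Type) (iD : MAlg σ D), K D iD →
      ∀ (u : @MHom σ A D _ iD) (v : @MHom σ B D _ iD),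
        (∀ p : A × B, u.toFun p.1 = v.toFun p.2) → Subsingleton D) := by
  refine ⟨?_, ?_, ?_⟩
  · intro C iC hKC g₁ g₂ h
    rcases Nat.eq_zero_or_pos N with hN | hN
    · have : Subsingleton C := h01 C iC hKC (fun i => absurd i.2 (by omega))
      cases g₁; cases g₂
      simp only [MHom.mk.injEq]
      funext a; exact Subsingleton.elim _ _
    · have b : B := zero B ⟨0, hN⟩
      cases g₁; cases g₂
      simp only [MHom.mk.injEq]
      funext a
      exact congrFun (congrArg MHom.toFun h) (a, b)
  · intro C iC hKC g₁ g₂ h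
    rcases Nat.eq_zero_or_pos N with hN | hN
    · have : Subsingleton C := h01 C iC hKC (fun i => absurd i.2 (by omega))
      cases g₁; cases g₂
      simp only [MHom.mk.injEq]
      funext a; exact Subsingleton.elim _ _
    · have a : A := zero A ⟨0, hN⟩
      cases g₁; cases g₂
      simp only [MHom.mk.injEq]
      funext b
      exact congrFun (congrArg MHom.toFun h) (a, b)
  · intro D iD hKD u v h
    apply h01 D iD hKD
    intro i
    have h1 := h (zero A i, one B i)
    rw [hz A D u i, ho B D v i] at h1
    exact h1
end
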